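/- The fixed point $\psi^\omega(0)$ of the morphism $\psi$ over $\Sigma_6 = \{0,1,2,3,4,5\}$ defined by $\psi(0)=0435$, $\psi(1)=2341$, $\psi(2)=3542$, $\psi(3)=3540$, $\psi(4)=4134$, $\psi(5)=4105$ is squarefree: it contains no factor of the form $zz$ with $z$ nonempty. -/

import Mathlib

/-- The 4-uniform morphism ψ on Σ₆. -/
def psi : Fin 6 → List (Fin 6) :=
  ![[0, 4, 3, 5], [2, 3, 4, 1], [3, 5, 4, 2], [3, 5, 4, 0], [4, 1, 3, 4], [4, 1, 0, 5]]

/-- Iterates of ψ starting from the letter 0. -/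
def psiIter : ℕ → List (Fin 6)
  | 0 => [0]
  | n + 1 => ((psiIter n).map psi).flatten

/-- The fixed point `ψ^ω(0)` as an infinite word (the `n`-th letter is the `n`-th letter
of any sufficiently long iterate). -/
def psiOmega : ℕ → Fin 6 := fun n => (psiIter (n + 1)).getD n 0

/-- `u` occurs as a factor of the infinite word `w` (at some position `i`). -/
def FactorOf {α : Type*} (u : List α) (w : ℕ → α) : Prop :=
  ∃ i : ℕ, u = (List.range u.length).map (fun k => w (i + k))


/-!
Call a word admissible if all its two-letter factors are among the twelve two-letter factors of
`ψ^ω(0)`. The morphism `ψ` maps admissible words to admissible words, and admissible squarefree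
words to squarefree words. A square of period at most 6 in `ψ(w)` lies inside the image of at most
four letters of `w`, which is a finite check. A longer square contains a whole block `ψ(a)`, and
since no `ψ(a)` occurs inside some `ψ(b)ψ(c)` at offset 1, 2 or 3, its period is `4m` and its
copies are aligned with the blocks; the two boundary blocks then force a square of period `m`
in `w`. Hence every iterate `ψⁿ(0)` is squarefree, and every factor of `ψ^ω(0)` is a factor of
one of them.
-/

open List

namespace List

variable {α β : Type*}

section UniformMorphism

variable {h : α → List β} {k : ℕ}

theorem length_flatMap_of_uniform (hk : ∀ a, (h a).length = k) (w : List α) :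
    (w.flatMap h).length = k * w.length := by
  induction w with
  | nil => rfl
  | cons a w ih => simp [hk, ih, Nat.mul_succ, Nat.add_comm]

theorem drop_flatMap_of_uniform (hk : ∀ a, (h a).length = k) (w : List α) (i : ℕ) :
    (w.flatMap h).drop (k * i) = (w.drop i).flatMap h := by
  induction w generalizing i with
  | nil => simp
  | cons a w ih =>
    cases i with
    | zero => simp
    | succ i =>
      rw [flatMap_cons, show k * (i + 1) = (h a).length + k * i by rw [hk]; ring,
        drop_length_add_append, ih]
      rfl

theorem take_flatMap_of_uniform (hk : ∀ a, (h a).length = k) (w : List α) (i : ℕ) :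
    (w.flatMap h).take (k * i) = (w.take i).flatMap h := by
  induction w generalizing i with
  | nil => simp
  | cons a w ih =>
    cases i with
    | zero => simp
    | succ i =>
      rw [flatMap_cons, show k * (i + 1) = (h a).length + k * i by rw [hk]; ring,
        take_length_add_append, ih]
      rfl

theorem take_drop_flatMap_of_uniform (hk : ∀ a, (h a).length = k) {w : List α} {i : ℕ}
    (hi : i < w.length) {r n : ℕ} (hrn : r + n ≤ k) :
    ((w.flatMap h).drop (k * i + r)).take n = ((h w[i]).drop r).take n := by
  have := hk w[i]
  rw [← drop_drop, drop_flatMap_of_uniform hk, drop_eq_getElem_cons hi, flatMap_cons,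
    drop_append_of_le_length (by omega), take_append_of_le_length (by simp; omega)]

end UniformMorphism

def HasSquareAt (w : List α) (p ℓ : ℕ) : Prop :=
  0 < ℓ ∧ p + 2 * ℓ ≤ w.length ∧ ∀ i < ℓ, w[p + i]? = w[p + ℓ + i]?

instance [DecidableEq α] (w : List α) (p ℓ : ℕ) : Decidable (HasSquareAt w p ℓ) := by
  unfold HasSquareAt; infer_instance

def IsSquareFree (w : List α) : Prop := ∀ p ℓ, ¬ w.HasSquareAt p ℓ

theorem HasSquareAt.take_drop {w : List α} {q p ℓ n : ℕ} (h : w.HasSquareAt (q + p) ℓ)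
    (hn : p + 2 * ℓ ≤ n) : ((w.drop q).take n).HasSquareAt p ℓ := by
  obtain ⟨hℓ, hlen, hsq⟩ := h
  refine ⟨hℓ, by simp; omega, fun i hi => ?_⟩
  simp only [getElem?_take, getElem?_drop]
  rw [if_pos (by omega), if_pos (by omega), ← add_assoc, hsq i hi]
  simp only [add_assoc]

theorem HasSquareAt.take_drop_eq {w : List α} {p ℓ : ℕ} (h : w.HasSquareAt p ℓ) {x n : ℕ}
    (hx : p ≤ x) (hxn : x + n ≤ p + ℓ) : (w.drop x).take n = (w.drop (x + ℓ)).take n := by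
  ext i : 1
  simp only [getElem?_take, getElem?_drop]
  split_ifs with hi
  · have := h.2.2 (x - p + i) (by omega)
    rwa [show p + (x - p + i) = x + i by omega, show p + ℓ + (x - p + i) = x + ℓ + i by omega]
      at this
  · rfl

end List

/-- The two-letter factors of `ψ^ω(0)`. -/
def Admissible (a b : Fin 6) : Prop :=
  (a, b) ∈ [(0, 4), (0, 5), (1, 0), (1, 3), (2, 3), (3, 4), (3, 5), (4, 0), (4, 1), (4, 2), (4, 3),
    (5, 4)]

instance : DecidableRel Admissible := fun a b => by unfold Admissible; infer_instance

theorem length_psi (a : Fin 6) : (psi a).length = 4 := by revert a; decide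

theorem psi_injective : Function.Injective psi := by unfold Function.Injective; decide

theorem isChain_psi (a : Fin 6) : (psi a).IsChain Admissible := by revert a; decide

theorem Admissible.psi {a b : Fin 6} (h : Admissible a b) :
    ∀ x ∈ (psi a).getLast?, ∀ y ∈ (psi b).head?, Admissible x y := by revert a b h; decide

theorem psi_ne_drop_append_take (a b c : Fin 6) {r : ℕ} (h0 : 0 < r) (h4 : r < 4) :
    psi a ≠ (psi b).drop r ++ (psi c).take r := by
  interval_cases r <;> revert a b c <;> decide

theorem eq_or_eq_of_drop_psi_eq_of_take_psi_eq {a b c : Fin 6} {r : ℕ} (h0 : 0 < r) (h4 : r < 4)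
    (hab : (psi a).drop r = (psi b).drop r) (hbc : (psi b).take r = (psi c).take r) :
    a = b ∨ b = c := by
  interval_cases r <;> revert a b c <;> decide

theorem not_hasSquareAt_flatMap_psi_of_length_le (u : List (Fin 6)) (hu : u.length ≤ 4)
    (hc : u.IsChain Admissible) : ∀ p < 4, ∀ ℓ < 7, ¬ (u.flatMap psi).HasSquareAt p ℓ := by
  rcases u with _ | ⟨a, _ | ⟨b, _ | ⟨c, _ | ⟨d, _ | ⟨e, u⟩⟩⟩⟩⟩
  · decide
  · revert a; decide
  · revert a b; decide
  · revert a b c; decide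
  · revert a b c d; decide
  · simp only [List.length_cons] at hu; omega

section FlatMapPsi

variable {w : List (Fin 6)}

theorem length_flatMap_psi (w : List (Fin 6)) : (w.flatMap psi).length = 4 * w.length :=
  length_flatMap_of_uniform length_psi w

theorem List.IsChain.flatMap_psi (hw : w.IsChain Admissible) :
    (w.flatMap psi).IsChain Admissible := by
  rw [flatMap_def, isChain_flatten (by simp [← length_eq_zero_iff, length_psi]), isChain_map]
  exact ⟨by simp [isChain_psi], hw.imp fun _ _ hab => hab.psi⟩

theorem not_hasSquareAt_flatMap_psi_of_lt_seven (hw : w.IsChain Admissible) (p : ℕ) {ℓ : ℕ}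
    (hℓ : ℓ < 7) : ¬ (w.flatMap psi).HasSquareAt p ℓ := by
  intro h
  have hfactor : ((w.flatMap psi).drop (4 * (p / 4))).take (4 * 4) =
      ((w.drop (p / 4)).take 4).flatMap psi := by
    rw [drop_flatMap_of_uniform length_psi, take_flatMap_of_uniform length_psi]
  rw [show p = 4 * (p / 4) + p % 4 by omega] at h
  have hsq := h.take_drop (n := 4 * 4) (by omega)
  rw [hfactor] at hsq
  exact not_hasSquareAt_flatMap_psi_of_length_le _ (by simp) ((hw.drop _).take 4) _
    (Nat.mod_lt _ (by norm_num)) ℓ hℓ hsq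

theorem four_dvd_of_hasSquareAt_flatMap_psi {p ℓ : ℕ} (h : (w.flatMap psi).HasSquareAt p ℓ)
    (hℓ : 7 ≤ ℓ) : 4 ∣ ℓ := by
  have hlen := h.2.1
  rw [length_flatMap_psi] at hlen
  set j := (p + 3) / 4
  set k := (4 * j + ℓ) / 4
  set r := (4 * j + ℓ) % 4
  by_contra hdvd
  -- Block `j` lies in the first half of the square; its copy `ℓ` later straddles blocks `k`
  -- and `k + 1`.
  have hblock := h.take_drop_eq (x := 4 * j) (n := 4) (by omega) (by omega)
  have hleft : ((w.flatMap psi).drop (4 * j)).take 4 = psi w[j] := by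
    simpa [take_of_length_le, length_psi] using
      take_drop_flatMap_of_uniform length_psi (w := w) (i := j) (r := 0) (n := 4) (by omega) le_rfl
  have hright : ((w.flatMap psi).drop (4 * j + ℓ)).take 4 =
      (psi w[k]).drop r ++ (psi w[k + 1]).take r := by
    have hk := take_drop_flatMap_of_uniform length_psi (w := w) (i := k) (r := r) (n := 4 - r)
      (by omega) (by omega)
    have hk1 := take_drop_flatMap_of_uniform length_psi (w := w) (i := k + 1) (r := 0) (n := r)
      (by omega) (by omega)
    rw [take_of_length_le (l := (psi w[k]).drop r) (by simp [length_psi])] at hk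
    rw [add_zero, drop_zero] at hk1
    rw [← hk, ← hk1, show 4 * (k + 1) = 4 * k + r + (4 - r) by omega,
      show 4 * j + ℓ = 4 * k + r by omega, ← drop_drop (i := 4 - r), ← take_add,
      Nat.sub_add_cancel (by omega)]
  exact psi_ne_drop_append_take _ _ _ (by omega) (by omega) (hleft ▸ hright ▸ hblock)

theorem getElem?_eq_of_hasSquareAt_flatMap_psi {p m i : ℕ}
    (h : (w.flatMap psi).HasSquareAt p (4 * m)) (hpi : p ≤ 4 * i) (him : 4 * i + 4 ≤ p + 4 * m) :
    w[i]? = w[i + m]? := by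
  have hlen := h.2.1
  rw [length_flatMap_psi] at hlen
  have hblock := h.take_drop_eq hpi him
  have hwi := take_drop_flatMap_of_uniform length_psi (w := w) (i := i) (r := 0) (n := 4)
    (by omega) le_rfl
  have hwim := take_drop_flatMap_of_uniform length_psi (w := w) (i := i + m) (r := 0) (n := 4)
    (by omega) le_rfl
  simp only [add_zero, drop_zero, take_of_length_le (le_of_eq (length_psi _))] at hwi hwim
  rw [show 4 * i + 4 * m = 4 * (i + m) by ring, hwi, hwim] at hblock
  rw [getElem?_eq_getElem (by omega), getElem?_eq_getElem (by omega), psi_injective hblock]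

theorem getElem?_eq_or_getElem?_eq_of_hasSquareAt_flatMap_psi {q r m : ℕ}
    (h : (w.flatMap psi).HasSquareAt (4 * q + r) (4 * m)) (hr : r < 4) :
    w[q]? = w[q + m]? ∨ q + 1 + 2 * m ≤ w.length ∧ w[q + m]? = w[q + 2 * m]? := by
  have hm := h.1
  have hlen := h.2.1
  rw [length_flatMap_psi] at hlen
  rcases r.eq_zero_or_pos with rfl | hr0
  · exact .inl (getElem?_eq_of_hasSquareAt_flatMap_psi h (by omega) (by omega))
  have hab := h.take_drop_eq (x := 4 * q + r) (n := 4 - r) le_rfl (by omega)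
  have hbc := h.take_drop_eq (x := 4 * (q + m)) (n := r) (by omega) (by omega)
  rw [show 4 * q + r + 4 * m = 4 * (q + m) + r by ring,
    take_drop_flatMap_of_uniform length_psi (by omega) (by omega),
    take_drop_flatMap_of_uniform length_psi (by omega) (by omega),
    take_of_length_le (l := (psi w[q]).drop r) (by simp [length_psi]),
    take_of_length_le (l := (psi w[q + m]).drop r) (by simp [length_psi])] at hab
  have hb := take_drop_flatMap_of_uniform length_psi (w := w) (i := q + m) (r := 0) (n := r)
    (by omega) (by omega)
  have hc := take_drop_flatMap_of_uniform length_psi (w := w) (i := q + 2 * m) (r := 0) (n := r)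
    (by omega) (by omega)
  rw [add_zero, drop_zero] at hb hc
  rw [show 4 * (q + m) + 4 * m = 4 * (q + 2 * m) by ring, hb, hc] at hbc
  rcases eq_or_eq_of_drop_psi_eq_of_take_psi_eq hr0 hr hab hbc with hfirst | hlast
  · left
    rw [getElem?_eq_getElem (by omega), getElem?_eq_getElem (by omega), hfirst]
  · right
    refine ⟨by omega, ?_⟩
    rw [getElem?_eq_getElem (by omega), getElem?_eq_getElem (by omega), hlast]

theorem exists_hasSquareAt_of_hasSquareAt_flatMap_psi {p m : ℕ}
    (h : (w.flatMap psi).HasSquareAt p (4 * m)) : ∃ q, w.HasSquareAt q m := by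
  have hm := h.1
  have hlen := h.2.1
  rw [length_flatMap_psi] at hlen
  obtain ⟨q, r, rfl, hr⟩ : ∃ q r, p = 4 * q + r ∧ r < 4 := ⟨p / 4, p % 4, by omega, by omega⟩
  have hblock (i : ℕ) (hqi : q < i) (him : i < q + m) : w[i]? = w[i + m]? :=
    getElem?_eq_of_hasSquareAt_flatMap_psi h (by omega) (by omega)
  rcases getElem?_eq_or_getElem?_eq_of_hasSquareAt_flatMap_psi h hr with hfirst | ⟨hq, hlast⟩
  · refine ⟨q, by omega, by omega, fun t ht => ?_⟩
    rcases t.eq_zero_or_pos with rfl | ht0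
    · simpa using hfirst
    · rw [add_right_comm q m]
      exact hblock (q + t) (by omega) (by omega)
  · refine ⟨q + 1, by omega, hq, fun t ht => ?_⟩
    rcases Nat.lt_or_ge t (m - 1) with ht1 | ht1
    · rw [add_right_comm (q + 1) m]
      exact hblock (q + 1 + t) (by omega) (by omega)
    · rwa [show q + 1 + t = q + m by omega, show q + 1 + m + t = q + 2 * m by omega]

theorem List.IsSquareFree.flatMap_psi (hsf : w.IsSquareFree) (hw : w.IsChain Admissible) :
    (w.flatMap psi).IsSquareFree := by
  intro p ℓ h
  rcases Nat.lt_or_ge ℓ 7 with hℓ | hℓ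
  · exact not_hasSquareAt_flatMap_psi_of_lt_seven hw p hℓ h
  · obtain ⟨m, rfl⟩ := four_dvd_of_hasSquareAt_flatMap_psi h hℓ
    obtain ⟨q, hq⟩ := exists_hasSquareAt_of_hasSquareAt_flatMap_psi h
    exact hsf q m hq

end FlatMapPsi

theorem psiIter_succ (n : ℕ) : psiIter (n + 1) = (psiIter n).flatMap psi := rfl

theorem length_psiIter (n : ℕ) : (psiIter n).length = 4 ^ n := by
  induction n with
  | zero => rfl
  | succ n ih => rw [psiIter_succ, length_flatMap_psi, ih, pow_succ, mul_comm]

theorem isSquareFree_and_isChain_psiIter (n : ℕ) :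
    (psiIter n).IsSquareFree ∧ (psiIter n).IsChain Admissible := by
  induction n with
  | zero => exact ⟨fun p ℓ ⟨hℓ, hlen, _⟩ => by simp [psiIter] at hlen; omega, .singleton 0⟩
  | succ n ih => exact ⟨ih.1.flatMap_psi ih.2, ih.2.flatMap_psi⟩

theorem psiIter_prefix_psiIter_succ (n : ℕ) : psiIter n <+: psiIter (n + 1) := by
  induction n with
  | zero => exact ⟨[4, 3, 5], rfl⟩
  | succ n ih => exact ih.flatMap psi

theorem psiIter_prefix_psiIter {m n : ℕ} (h : m ≤ n) : psiIter m <+: psiIter n :=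
  Nat.le_induction (prefix_refl _) (fun n _ ih => ih.trans (psiIter_prefix_psiIter_succ n)) n h

theorem getElem_psiIter {n j : ℕ} (hj : j < (psiIter n).length) : (psiIter n)[j] = psiOmega j := by
  have hj' : j < (psiIter (j + 1)).length := by
    rw [length_psiIter]
    exact (Nat.lt_pow_self (by norm_num)).trans (Nat.pow_lt_pow_right (by norm_num) j.lt_succ_self)
  rw [psiOmega, getD_eq_getElem _ _ hj']
  rcases Nat.le_total n (j + 1) with h | h
  · exact (psiIter_prefix_psiIter h).getElem hj
  · exact ((psiIter_prefix_psiIter h).getElem hj').symm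

theorem FactorOf.append_self {α : Type*} {z : List α} {w : ℕ → α} (h : FactorOf (z ++ z) w) :
    ∃ i, ∀ t < z.length, w (i + t) = w (i + z.length + t) := by
  obtain ⟨i, hi⟩ := h
  have hget (k : ℕ) (hk : k < (z ++ z).length) : (z ++ z)[k] = w (i + k) := by
    simp only [getElem_of_eq hi hk, getElem_map, getElem_range]
  refine ⟨i, fun t ht => ?_⟩
  calc w (i + t) = (z ++ z)[t]'(by simp; omega) := (hget t _).symm
    _ = (z ++ z)[z.length + t]'(by simp; omega) := by
      rw [getElem_append_left ht, getElem_append_right (by omega)]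
      simp
    _ = w (i + z.length + t) := by rw [hget, add_assoc]

theorem psiOmega_squarefree :
    ∀ z : List (Fin 6), z ≠ [] → ¬ FactorOf (z ++ z) psiOmega := by
  intro z hz hfactor
  obtain ⟨i, hperiod⟩ := hfactor.append_self
  have hN : i + 2 * z.length < 4 ^ (i + 2 * z.length) := Nat.lt_pow_self (by norm_num)
  refine (isSquareFree_and_isChain_psiIter (i + 2 * z.length)).1 i z.length
    ⟨length_pos_of_ne_nil hz, by rw [length_psiIter]; omega, fun t ht => ?_⟩
  have hlen := length_psiIter (i + 2 * z.length)
  rw [getElem?_eq_getElem (by omega), getElem?_eq_getElem (by omega), getElem_psiIter,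
    getElem_psiIter, hperiod t ht]
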